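/- Let d ≥ 1 be an integer and α, μ real with α > d+1 and μ > 0. The rational function of the nonnegative integer m given by R(m) = [(α+m-1)(α+m-2)⋯(α+m-d)] / [(μ(α+m)-1)(μ(α+m)-2)⋯(μ(α+m)-d)] is independent of m (i.e., constant for all integers m ≥ 0) if and only if μ = 1. -/

import Mathlib

/-!
Write `P t = (t - 1)(t - 2)⋯(t - d)`. Cross-multiplying, the hypothesis says
`P (t) · P (μα) = P (α) · P (μt)` at `t = α + m` for all `m`, hence for all `t`, as both sides are
polynomials in `t`. Since `P α ≠ 0`, multiplication by `μ` maps the roots `{1, …, d}` of `P` into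
themselves; the images of `1` and of `d` give `1 ≤ μ` and `μ d ≤ d`.
-/

open Finset Polynomial

theorem Polynomial.eq_of_eval_add_natCast_eq {R : Type*} [CommRing R] [IsDomain R] [CharZero R]
    {p q : R[X]} (a : R) (h : ∀ m : ℕ, p.eval (a + m) = q.eval (a + m)) : p = q :=
  eq_of_infinite_eval_eq p q <| Set.infinite_of_injective_forall_mem
    (fun _ _ hmn => Nat.cast_injective (add_left_cancel hmn)) h

section ProdRangeSubSucc

variable {R : Type*} {d : ℕ}

theorem prod_range_sub_succ_eq_zero_iff [CommRing R] [NoZeroDivisors R] [Nontrivial R] {y : R} :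
    ∏ i ∈ range d, (y - (i + 1)) = 0 ↔ ∃ i < d, y = i + 1 := by
  simp [prod_eq_zero_iff, sub_eq_zero]

theorem prod_range_sub_succ_pos [CommRing R] [PartialOrder R] [IsStrictOrderedRing R] {y : R}
    (hy : d < y) : 0 < ∏ i ∈ range d, (y - (i + 1)) := by
  refine prod_pos fun i hi => sub_pos.2 (lt_of_le_of_lt ?_ hy)
  exact_mod_cast mem_range.1 hi

theorem prod_range_sub_succ_mul_eq_of_natCast [CommRing R] [IsDomain R] [CharZero R]
    {a μ c c' : R}
    (h : ∀ m : ℕ, (∏ i ∈ range d, (a + m - (i + 1))) * c =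
      c' * ∏ i ∈ range d, (μ * (a + m) - (i + 1)))
    (t : R) : (∏ i ∈ range d, (t - (i + 1))) * c = c' * ∏ i ∈ range d, (μ * t - (i + 1)) := by
  have key := Polynomial.eq_of_eval_add_natCast_eq
    (p := (∏ i ∈ range d, (X - C ((i : R) + 1))) * C c)
    (q := C c' * ∏ i ∈ range d, (C μ * X - C ((i : R) + 1))) a (by simpa [eval_prod] using h)
  simpa [eval_prod] using congrArg (eval t) key

theorem eq_one_of_prod_range_sub_succ_eq_zero_imp [Field R] [LinearOrder R] [IsStrictOrderedRing R]
    (hd : 1 ≤ d) {μ : R}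
    (h : ∀ t : R, ∏ i ∈ range d, (t - (i + 1)) = 0 → ∏ i ∈ range d, (μ * t - (i + 1)) = 0) :
    μ = 1 := by
  have root (k : ℕ) (hk1 : 1 ≤ k) (hkd : k ≤ d) : ∃ i < d, μ * k = i + 1 :=
    prod_range_sub_succ_eq_zero_iff.1 <| h k <| prod_range_sub_succ_eq_zero_iff.2
      ⟨k - 1, by omega, by rw [Nat.cast_sub hk1]; ring⟩
  obtain ⟨i, -, hi⟩ := root 1 le_rfl hd
  obtain ⟨j, hj, hj'⟩ := root d hd le_rfl
  have hjd : (j : R) + 1 ≤ d := by exact_mod_cast hj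
  have hd₀ : (0 : R) < d := by exact_mod_cast hd
  rw [Nat.cast_one, mul_one] at hi
  have hi₀ : (0 : R) ≤ i := Nat.cast_nonneg i
  nlinarith

end ProdRangeSubSucc

theorem stmt7 (d : ℕ) (hd : 1 ≤ d) (α μ : ℝ) (hα : α > d + 1) (hμ : 0 < μ)
    (hμα : μ * α > d) :
    (∀ m : ℕ,
        (∏ i ∈ Finset.range d, (α + m - (i + 1))) /
          (∏ i ∈ Finset.range d, (μ * (α + m) - (i + 1))) =
        (∏ i ∈ Finset.range d, (α - (i + 1))) /
          (∏ i ∈ Finset.range d, (μ * α - (i + 1)))) ↔ μ = 1 := by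
  have hαd : (d : ℝ) < α := by linarith
  have hnum (m : ℕ) : 0 < ∏ i ∈ range d, (α + m - (i + 1)) :=
    prod_range_sub_succ_pos (by linarith [(Nat.cast_nonneg m : (0 : ℝ) ≤ m)])
  have hden (m : ℕ) : 0 < ∏ i ∈ range d, (μ * (α + m) - (i + 1)) :=
    prod_range_sub_succ_pos (by nlinarith [(Nat.cast_nonneg m : (0 : ℝ) ≤ m)])
  have hnum₀ : 0 < ∏ i ∈ range d, (α - (i + 1)) := prod_range_sub_succ_pos hαd
  have hden₀ : 0 < ∏ i ∈ range d, (μ * α - (i + 1)) := prod_range_sub_succ_pos hμα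
  constructor
  · intro h
    have hcross := prod_range_sub_succ_mul_eq_of_natCast fun m =>
      (div_eq_div_iff (hden m).ne' hden₀.ne').1 (h m)
    refine eq_one_of_prod_range_sub_succ_eq_zero_imp hd fun t ht => ?_
    have := hcross t
    rw [ht, zero_mul, eq_comm] at this
    exact (mul_eq_zero.1 this).resolve_left hnum₀.ne'
  · rintro rfl m
    simp only [one_mul]
    rw [div_self (hnum m).ne', div_self hnum₀.ne']
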